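/- arXiv:0708.1160 — 3 statements merged into one kernel-verified Lean document; each statement's English description precedes it below -/
import Mathlib

section
/- Let M be a quaternion CR-submanifold of a locally conformal quaternion Kaehler manifold M̄. Then for any X ∈ Γ(D) and T, W ∈ Γ(D^⊥), the shape operator satisfies g(A_{J_aT}W, X) = g(A_{J_aW}T, X) for each a = 1,2,3. -/
/-!
Abstract model of a locally conformal quaternion Kaehler (l.c.q.K.) manifold `M̄`
together with a quaternion CR-submanifold `M`.

`R` plays the role of the (commutative) ring of smooth functions on `M̄` and `V`
that of the `R`-module of vector fields on `M̄`.  The structure `LCQK` records: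
a derivation action `act` of vector fields on functions, the Lie bracket, the
Riemannian metric `g`, its Levi-Civita connection `nabla`, the three local almost
complex structures `J a` (a = 1,2,3, indexed by `Fin 3`) satisfying the quaternionic
identities and compatibility with `g`, the Lee vector field `B` (the Lee form is
`ω X = g X B`), the skew-symmetric matrix `Q` of local 1-forms, and the fundamental
structure equation (2.4) of a l.c.q.K. manifold:
`∇̄_X (J_a Y) = J_a ∇̄_X Y + ½{θ_a(Y) X − ω(Y) J_a X − Ω_a(X,Y) B + g(X,Y) J_a B}
   + Q_{ab}(X) J_b Y + Q_{ac}(X) J_c Y`,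
where `θ_a = ω ∘ J_a` and `Ω_a(X,Y) = g(X, J_a Y)`.
`half` is the function `1/2`.
-/
structure LCQK (R : Type) (V : Type) [CommRing R] [AddCommGroup V] [Module R V] where
  half : R
  half_add : half + half = 1
  /-- action of a vector field on a function (derivation) -/
  act : V → R → R
  act_add : ∀ X f g, act X (f + g) = act X f + act X g
  act_mul : ∀ X f g, act X (f * g) = f * act X g + g * act X f
  /-- Lie bracket of vector fields -/
  bracket : V → V → V
  /-- the Riemannian metric of `M̄` -/
  g : V → V → R
  g_symm : ∀ X Y, g X Y = g Y X
  g_add_left : ∀ X Y Z, g (X + Y) Z = g X Z + g Y Z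
  g_smul_left : ∀ (f : R) (X Y : V), g (f • X) Y = f * g X Y
  /-- the Levi-Civita connection `∇̄` of `M̄` -/
  nabla : V → V → V
  nabla_add_left : ∀ X Y Z, nabla (X + Y) Z = nabla X Z + nabla Y Z
  nabla_smul_left : ∀ (f : R) (X Y : V), nabla (f • X) Y = f • nabla X Y
  nabla_add_right : ∀ X Y Z, nabla X (Y + Z) = nabla X Y + nabla X Z
  nabla_smul_right : ∀ (X : V) (f : R) (Y : V),
    nabla X (f • Y) = f • nabla X Y + act X f • Y
  nabla_metric : ∀ X Y Z, act X (g Y Z) = g (nabla X Y) Z + g Y (nabla X Z)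
  torsion_free : ∀ X Y, nabla X Y - nabla Y X = bracket X Y
  /-- the local almost complex structures `J₁, J₂, J₃` spanning the bundle `H` -/
  J : Fin 3 → V → V
  J_add : ∀ a X Y, J a (X + Y) = J a X + J a Y
  J_smul : ∀ a (f : R) (X : V), J a (f • X) = f • J a X
  J_sq : ∀ a X, J a (J a X) = -X
  J_cyc : ∀ a X, J a (J (a + 1) X) = J (a + 2) X
  g_J : ∀ a X Y, g (J a X) (J a Y) = g X Y
  /-- the Lee vector field `B` (so the Lee form is `ω X = g X B`) -/
  B : V
  /-- the skew-symmetric matrix of local 1-forms `Q_{ab}` -/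
  Q : Fin 3 → Fin 3 → V → R
  Q_skew : ∀ a b X, Q a b X = -Q b a X
  /-- the l.c.q.K. structure equation (2.4) -/
  struct_eq : ∀ a X Y,
    nabla X (J a Y) = J a (nabla X Y)
      + half • ((g (J a Y) B) • X - (g Y B) • J a X - (g X (J a Y)) • B
          + (g X Y) • J a B)
      + (Q a (a + 1) X) • J (a + 1) Y + (Q a (a + 2) X) • J (a + 2) Y

namespace LCQK

variable {R V : Type} [CommRing R] [AddCommGroup V] [Module R V]

/-- the Lee form `ω X = g(X, B)` -/
def lee (d : LCQK R V) (X : V) : R := d.g X d.B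

/-- the fundamental 2-forms `Ω_a(X,Y) = g(X, J_a Y)` -/
def Om (d : LCQK R V) (a : Fin 3) (X Y : V) : R := d.g X (d.J a Y)

/-- the curvature tensor `R̄(X,Y)Z` of the Levi-Civita connection of `M̄` -/
def curv (d : LCQK R V) (X Y Z : V) : V :=
  d.nabla X (d.nabla Y Z) - d.nabla Y (d.nabla X Z) - d.nabla (d.bracket X Y) Z

/-- the (0,4) curvature tensor `R̄(X,Y,Z,W) = g(R̄(X,Y)Z, W)` of `M̄` -/
def R4 (d : LCQK R V) (X Y Z W : V) : R := d.g (d.curv X Y Z) W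

end LCQK

/-- A quaternion CR-submanifold `M` of the l.c.q.K. manifold `M̄`.

`DD` is (the module of sections of) the quaternion (invariant) distribution `D`,
`Dp` the totally real (anti-invariant) distribution `D^⊥`; they are orthogonal and
the tangent bundle of `M` is `TM = D ⊕ D^⊥` (modelled by `DD ⊔ Dp`); each `J_a`
preserves `D` and maps `D^⊥` into the normal bundle `TM^⊥`.  `tan` is the
orthogonal projection of `M̄`-vector fields onto the tangent part of `M`. -/
structure QCRSub (R V : Type) [CommRing R] [AddCommGroup V] [Module R V]
    (d : LCQK R V) where
  DD : Submodule R V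
  Dp : Submodule R V
  orth : ∀ X ∈ DD, ∀ Z ∈ Dp, d.g X Z = 0
  J_inv : ∀ (a : Fin 3), ∀ X ∈ DD, d.J a X ∈ DD
  J_anti : ∀ (a : Fin 3), ∀ Z ∈ Dp, ∀ Y ∈ DD ⊔ Dp, d.g (d.J a Z) Y = 0
  /-- tangential projection onto `TM = D ⊕ D^⊥` -/
  tan : V → V
  tan_add : ∀ X Y, tan (X + Y) = tan X + tan Y
  tan_smul : ∀ (f : R) (X : V), tan (f • X) = f • tan X
  tan_mem : ∀ X, tan X ∈ DD ⊔ Dp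
  tan_of_mem : ∀ X ∈ DD ⊔ Dp, tan X = X
  tan_orth : ∀ (X : V), ∀ Y ∈ DD ⊔ Dp, d.g (X - tan X) Y = 0
  bracket_tangent : ∀ X ∈ DD ⊔ Dp, ∀ Y ∈ DD ⊔ Dp, d.bracket X Y ∈ DD ⊔ Dp

namespace QCRSub

variable {R V : Type} [CommRing R] [AddCommGroup V] [Module R V] {d : LCQK R V}

/-- the tangent bundle `TM = D ⊕ D^⊥` of `M` -/
def Tg (s : QCRSub R V d) : Submodule R V := s.DD ⊔ s.Dp

/-- a vector field is normal to `M` if it is orthogonal to all tangent fields -/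
def IsNormal (s : QCRSub R V d) (N : V) : Prop := ∀ Y ∈ s.Tg, d.g N Y = 0

/-- normal part of a vector field along `M` -/
def nor (s : QCRSub R V d) (X : V) : V := X - s.tan X

/-- the induced (Levi-Civita) connection `∇` of `M` (Gauss formula) -/
def conn (s : QCRSub R V d) (X Y : V) : V := s.tan (d.nabla X Y)

/-- the second fundamental form `h` of `M` (Gauss formula `∇̄_X Y = ∇_X Y + h(X,Y)`) -/
def h (s : QCRSub R V d) (X Y : V) : V := d.nabla X Y - s.tan (d.nabla X Y)

/-- the shape operator `A_N X` (Weingarten formula `∇̄_X N = −A_N X + ∇^⊥_X N`) -/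
def A (s : QCRSub R V d) (N X : V) : V := -(s.tan (d.nabla X N))

/-- the normal connection `∇^⊥` -/
def nconn (s : QCRSub R V d) (X N : V) : V := d.nabla X N - s.tan (d.nabla X N)

/-- `φ_a X`: tangential part of `J_a X` for `X` tangent -/
def phi (s : QCRSub R V d) (a : Fin 3) (X : V) : V := s.tan (d.J a X)

/-- `ϖ_a X`: normal part of `J_a X` for `X` tangent -/
def varpi (s : QCRSub R V d) (a : Fin 3) (X : V) : V := s.nor (d.J a X)

/-- `f_a N`: tangential part of `J_a N` for `N` normal -/
def fpart (s : QCRSub R V d) (a : Fin 3) (N : V) : V := s.tan (d.J a N)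

/-- `t_a N`: normal (μ-)part of `J_a N` for `N` normal -/
def tn (s : QCRSub R V d) (a : Fin 3) (N : V) : V := s.nor (d.J a N)

/-- membership in `μ`, the orthogonal complement of the `J_a D^⊥` in `TM^⊥` -/
def inMu (s : QCRSub R V d) (N : V) : Prop :=
  s.IsNormal N ∧ ∀ (a : Fin 3), ∀ Z ∈ s.Dp, d.g N (d.J a Z) = 0

end QCRSub

/-!
By the Weingarten formula and torsion-freeness, `g(A_N Y, X) = g(N, ∇̄_X Y)` for every normal
`N` and tangent `X, Y`; with `N = J_a T`, `Y = W` the claim becomes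
`g(J_a T, ∇̄_X W) = g(J_a W, ∇̄_X T)`. Differentiating `g(J_a W, T) = 0` along `X` and expanding
`∇̄_X (J_a W)` by the structure equation, every correction term pairs to zero with `T`, because
`D` is `J`-invariant, `J` maps `D^⊥` into the normal bundle, and `D ⊥ D^⊥`.
-/

namespace LCQK

variable {R V : Type} [CommRing R] [AddCommGroup V] [Module R V] (d : LCQK R V)

theorem act_zero (X : V) : d.act X 0 = 0 := by
  simpa using d.act_add X 0 0

theorem g_add_right (X Y Z : V) : d.g X (Y + Z) = d.g X Y + d.g X Z := by
  rw [d.g_symm, d.g_add_left, d.g_symm Y, d.g_symm Z]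

theorem g_neg_left (X Y : V) : d.g (-X) Y = -d.g X Y := by
  rw [← neg_one_smul R X, d.g_smul_left, neg_one_mul]

theorem g_neg_right (X Y : V) : d.g X (-Y) = -d.g X Y := by
  rw [d.g_symm, g_neg_left, d.g_symm]

theorem g_sub_left (X Y Z : V) : d.g (X - Y) Z = d.g X Z - d.g Y Z := by
  rw [sub_eq_add_neg, d.g_add_left, g_neg_left, ← sub_eq_add_neg]

theorem g_J_left (a : Fin 3) (X Y : V) : d.g (d.J a X) Y = -d.g X (d.J a Y) := by
  have h := d.g_J a X (d.J a Y)
  rw [d.J_sq, g_neg_right] at h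
  rw [← h, neg_neg]

theorem g_nabla_left_eq_neg_of_g_eq_zero {X Y Z : V} (h : d.g Y Z = 0) :
    d.g (d.nabla X Y) Z = -d.g Y (d.nabla X Z) := by
  have hm := d.nabla_metric X Y Z
  rw [h, act_zero] at hm
  exact eq_neg_of_add_eq_zero_left hm.symm

end LCQK

namespace QCRSub

variable {R V : Type} [CommRing R] [AddCommGroup V] [Module R V] {d : LCQK R V}
  (s : QCRSub R V d)

theorem g_tan_left (v : V) {Y : V} (hY : Y ∈ s.Tg) : d.g (s.tan v) Y = d.g v Y := by
  have h := s.tan_orth v Y hY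
  rw [d.g_sub_left, sub_eq_zero] at h
  exact h.symm

theorem isNormal_J_of_mem_Dp (a : Fin 3) {Z : V} (hZ : Z ∈ s.Dp) : s.IsNormal (d.J a Z) :=
  s.J_anti a Z hZ

theorem g_A_eq_g_nabla {N X Y : V} (hN : s.IsNormal N) (hX : X ∈ s.Tg) (hY : Y ∈ s.Tg) :
    d.g (s.A N Y) X = d.g N (d.nabla X Y) := by
  have hYX : d.nabla Y X = d.bracket Y X + d.nabla X Y :=
    sub_eq_iff_eq_add.mp (d.torsion_free Y X)
  have hbracket : d.g N (d.bracket Y X) = 0 := hN _ (s.bracket_tangent Y hY X hX)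
  rw [A, d.g_neg_left, s.g_tan_left _ hX, d.g_nabla_left_eq_neg_of_g_eq_zero (hN X hX), neg_neg,
    hYX, d.g_add_right, hbracket, zero_add]

theorem g_nabla_J_eq_neg {a : Fin 3} {X T W : V} (hX : X ∈ s.DD) (hT : T ∈ s.Dp)
    (hW : W ∈ s.Dp) : d.g (d.nabla X (d.J a W)) T = -d.g (d.nabla X W) (d.J a T) := by
  have hT' : T ∈ s.Tg := Submodule.mem_sup_right hT
  have hXW : d.g X W = 0 := s.orth X hX W hW
  have hXT : d.g X T = 0 := s.orth X hX T hT
  have hJXT : d.g (d.J a X) T = 0 := s.orth _ (s.J_inv a X hX) T hT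
  have hXJW : d.g X (d.J a W) = 0 := by
    rw [d.g_symm]; exact s.J_anti a W hW X (Submodule.mem_sup_left hX)
  have hJW₁ : d.g (d.J (a + 1) W) T = 0 := s.J_anti _ W hW T hT'
  have hJW₂ : d.g (d.J (a + 2) W) T = 0 := s.J_anti _ W hW T hT'
  rw [d.struct_eq a X W]
  simp only [d.g_add_left, d.g_sub_left, d.g_smul_left, hXW, hXT, hJXT, hXJW, hJW₁, hJW₂,
    d.g_J_left]
  ring

theorem g_J_nabla_comm {a : Fin 3} {X T W : V} (hX : X ∈ s.DD) (hT : T ∈ s.Dp)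
    (hW : W ∈ s.Dp) : d.g (d.J a T) (d.nabla X W) = d.g (d.J a W) (d.nabla X T) := by
  have hJWT : d.g (d.J a W) T = 0 := s.J_anti a W hW T (Submodule.mem_sup_right hT)
  rw [← neg_neg (d.g (d.J a W) _), ← d.g_nabla_left_eq_neg_of_g_eq_zero hJWT,
    s.g_nabla_J_eq_neg hX hT hW, neg_neg, d.g_symm]

end QCRSub

/-- equation (3.6): For a quaternion CR-submanifold `M` of a l.c.q.K.
manifold, for any `X ∈ Γ(D)` and `T, W ∈ Γ(D^⊥)` the shape operator satisfies
`g(A_{J_aT}W, X) = g(A_{J_aW}T, X)` for each `a = 1,2,3`. -/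
theorem shape_symmetric {R V : Type} [CommRing R] [AddCommGroup V] [Module R V]
    (d : LCQK R V) (s : QCRSub R V d) :
    ∀ (a : Fin 3), ∀ X ∈ s.DD, ∀ T ∈ s.Dp, ∀ W ∈ s.Dp,
      d.g (s.A (d.J a T) W) X = d.g (s.A (d.J a W) T) X := by
  intro a X hX T hT W hW
  have hX' : X ∈ s.Tg := Submodule.mem_sup_left hX
  rw [s.g_A_eq_g_nabla (s.isNormal_J_of_mem_Dp a hT) hX' (Submodule.mem_sup_right hW),
    s.g_A_eq_g_nabla (s.isNormal_J_of_mem_Dp a hW) hX' (Submodule.mem_sup_right hT)]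
  exact s.g_J_nabla_comm hX hT hW
end

section
/- Let M be a quaternion CR-submanifold of a locally conformal quaternion Kaehler manifold M̄. Then for any X, Y ∈ Γ(D) one has h(X, J_aY) = ϖ_a(∇_X Y) + t_a h(X,Y) + (1/2){g(X,Y)(J_aB)^⊥ − Ω_a(X,Y)B^⊥}, where for a tangent vector field W one writes J_aW = φ_aW + ϖ_aW with φ_aW tangent and ϖ_aW normal, for a normal vector field V one writes J_aV = f_aV + t_aV with f_aV tangent and t_aV normal, Ω_a(X,Y) = g(X, J_aY), and B^⊥ denotes the normal component of the Lee vector field B. -/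
/-!
Take normal parts in the structure equation (2.4) for `Y ∈ D`. On the left this gives
`h(X, J_a Y)`; on the right `J_a ∇̄_X Y = J_a ∇_X Y + J_a h(X,Y)` contributes
`ϖ_a ∇_X Y + t_a h(X,Y)`, and the terms along `X`, `J_a X`, `J_{a+1} Y`, `J_{a+2} Y` vanish
because `D` is tangent and `J`-invariant.
-/

namespace QCRSub

variable {R V : Type} [CommRing R] [AddCommGroup V] [Module R V] {d : LCQK R V}
  (s : QCRSub R V d)

theorem nor_add (X Y : V) : s.nor (X + Y) = s.nor X + s.nor Y := by
  simp only [nor, s.tan_add]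
  abel

theorem nor_smul (f : R) (X : V) : s.nor (f • X) = f • s.nor X := by
  simp only [nor, s.tan_smul, smul_sub]

theorem nor_sub (X Y : V) : s.nor (X - Y) = s.nor X - s.nor Y :=
  eq_sub_of_add_eq (by rw [← s.nor_add, sub_add_cancel])

theorem nor_eq_zero_of_mem_Tg {X : V} (hX : X ∈ s.Tg) : s.nor X = 0 := by
  rw [nor, s.tan_of_mem X hX, sub_self]

theorem nor_J_eq_zero_of_mem_DD (a : Fin 3) {X : V} (hX : X ∈ s.DD) :
    s.nor (d.J a X) = 0 :=
  s.nor_eq_zero_of_mem_Tg (Submodule.mem_sup_left (s.J_inv a X hX))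

theorem h_eq_nor_nabla (X Y : V) : s.h X Y = s.nor (d.nabla X Y) := rfl

theorem varpi_conn_add_tn_h (a : Fin 3) (X Y : V) :
    s.varpi a (s.conn X Y) + s.tn a (s.h X Y) = s.nor (d.J a (d.nabla X Y)) := by
  rw [varpi, tn, conn, h, ← s.nor_add, ← d.J_add, add_sub_cancel]

end QCRSub

/-- Lemma 3.2, equation (3.9): For a quaternion CR-submanifold `M` of
a l.c.q.K. manifold, for any `X, Y ∈ Γ(D)` one has
`h(X, J_aY) = ϖ_a(∇_X Y) + t_a h(X,Y) + ½{g(X,Y)(J_aB)^⊥ − Ω_a(X,Y)B^⊥}`,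
where `ϖ_a` (resp. `t_a`) is the normal part of `J_a` applied to a tangent (resp.
normal) field, `Ω_a(X,Y) = g(X, J_aY)` and `B^⊥` is the normal part of `B`. -/
theorem h_JY_formula {R V : Type} [CommRing R] [AddCommGroup V] [Module R V]
    (d : LCQK R V) (s : QCRSub R V d) :
    ∀ (a : Fin 3), ∀ X ∈ s.DD, ∀ Y ∈ s.DD,
      s.h X (d.J a Y)
        = s.varpi a (s.conn X Y) + s.tn a (s.h X Y)
          + d.half • (d.g X Y • s.nor (d.J a d.B) - d.Om a X Y • s.nor d.B) := by
  intro a X hX Y hY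
  have hX_tangent : s.nor X = 0 := s.nor_eq_zero_of_mem_Tg (Submodule.mem_sup_left hX)
  have hJX_tangent := s.nor_J_eq_zero_of_mem_DD a hX
  have hJ₁Y_tangent := s.nor_J_eq_zero_of_mem_DD (a + 1) hY
  have hJ₂Y_tangent := s.nor_J_eq_zero_of_mem_DD (a + 2) hY
  rw [s.varpi_conn_add_tn_h, s.h_eq_nor_nabla, d.struct_eq]
  simp only [s.nor_add, s.nor_sub, s.nor_smul, hX_tangent, hJX_tangent, hJ₁Y_tangent,
    hJ₂Y_tangent, LCQK.Om, smul_zero, add_zero]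
  module
end

section
/- Let M̄ be a compact locally conformal quaternion Kaehler manifold with the metric normalized so that the Lee form ω is parallel (∇̄ω = 0) and ‖ω‖ = 1, and let M be a quaternion CR-submanifold of M̄. Then for any orthonormal vector fields X ∈ Γ(D) and Y ∈ Γ(D^⊥) one has 0 = −R̄(X,Y,X,Y) + R̄(X,Y,J_aX,J_aY) + (1/4)ω(X)² + (1/4)ω(Y)² − 1/4, where R̄ is the Riemann curvature tensor of M̄. -/
/-!
The Weyl connection `D̄ = ∇̄ - ½ S`, `S(X,Y) = ω(X)Y + ω(Y)X - g(X,Y)B`, preserves `H`, so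
its curvature commutes with each `J_a` up to a section of `H`. Since `J_e X` is tangent and
`J_a Y` is normal, this gives `g(R^D̄(X,Y)J_aX, J_aY) = g(R^D̄(X,Y)X, Y)`. When `∇̄B = 0` the
tensor `S` is parallel and `R^D̄(X,Y) = R̄(X,Y) + ¼[S_X, S_Y]`, so the identity comes down to
evaluating `g([S_X, S_Y]Z, W)` at `(Z, W) = (X, Y)` and at `(J_aX, J_aY)`.
-/

namespace LCQK

variable {R V : Type} [CommRing R] [AddCommGroup V] [Module R V] (d : LCQK R V)

theorem act_one (X : V) : d.act X 1 = 0 := by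
  have h := d.act_mul X 1 1
  simp only [mul_one] at h
  linear_combination -h

theorem act_half (X : V) : d.act X d.half = 0 := by
  have h := d.act_add X d.half d.half
  rw [d.half_add, d.act_one] at h
  linear_combination -d.half * h - d.act X d.half * d.half_add

theorem g_smul_right (f : R) (X Y : V) : d.g X (f • Y) = f * d.g X Y := by
  rw [d.g_symm, d.g_smul_left, d.g_symm]

def gLeft (W : V) : V →ₗ[R] R where
  toFun X := d.g X W
  map_add' X Y := d.g_add_left X Y W
  map_smul' f X := d.g_smul_left f X W

theorem g_zero_right (X : V) : d.g X 0 = 0 := by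
  rw [d.g_symm]
  exact (d.gLeft X).map_zero

theorem g_sub_right (X Y Z : V) : d.g X (Y - Z) = d.g X Y - d.g X Z := by
  rw [d.g_symm, d.g_sub_left, d.g_symm Y, d.g_symm Z]

theorem g_J_self (a : Fin 3) (X : V) : d.g X (d.J a X) = 0 := by
  have h := d.g_J a X (d.J a X)
  rw [d.J_sq, d.g_symm, ← neg_one_smul R X, d.g_smul_left] at h
  linear_combination -d.half * h - d.g X (d.J a X) * d.half_add

theorem J_sub (a : Fin 3) (X Y : V) : d.J a (X - Y) = d.J a X - d.J a Y :=
  (AddMonoidHom.mk' (d.J a) (d.J_add a)).map_sub X Y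

theorem nabla_sub_right (X Y Z : V) : d.nabla X (Y - Z) = d.nabla X Y - d.nabla X Z :=
  (AddMonoidHom.mk' (d.nabla X) (d.nabla_add_right X)).map_sub Y Z

def connCurv (D : V → V → V) (X Y Z : V) : V :=
  D X (D Y Z) - D Y (D X Z) - D (d.bracket X Y) Z

/-- `D_X (J_a Z) - J_a (D_X Z)` for a connection `D` preserving `H`. -/
def connForm (a : Fin 3) (X Z : V) : V :=
  d.Q a (a + 1) X • d.J (a + 1) Z + d.Q a (a + 2) X • d.J (a + 2) Z

def quatSpan (Z : V) : Submodule R V :=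
  Submodule.span R (Set.range fun e => d.J e Z)

theorem J_mem_quatSpan (e : Fin 3) (Z : V) : d.J e Z ∈ d.quatSpan Z :=
  Submodule.subset_span ⟨e, rfl⟩

theorem connForm_mem_quatSpan (a : Fin 3) (X Z : V) : d.connForm a X Z ∈ d.quatSpan Z :=
  add_mem (Submodule.smul_mem _ _ (d.J_mem_quatSpan _ Z))
    (Submodule.smul_mem _ _ (d.J_mem_quatSpan _ Z))

theorem g_eq_zero_of_mem_quatSpan {Z W v : V} (hW : ∀ e, d.g (d.J e Z) W = 0)
    (hv : v ∈ d.quatSpan Z) : d.g v W = 0 := by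
  have hle : d.quatSpan Z ≤ LinearMap.ker (d.gLeft W) :=
    Submodule.span_le.mpr (Set.range_subset_iff.mpr hW)
  exact hle hv

structure IsHConnection (D : V → V → V) : Prop where
  add_right : ∀ X Y Z, D X (Y + Z) = D X Y + D X Z
  smul_right : ∀ X (f : R) Y, D X (f • Y) = f • D X Y + d.act X f • Y
  J_eq : ∀ a X Z, D X (d.J a Z) = d.J a (D X Z) + d.connForm a X Z

section IsHConnection

variable {D : V → V → V}

theorem sub_connForm_mem_quatSpan (hD : d.IsHConnection D) (a : Fin 3) (X Y Z : V) :
    D X (d.connForm a Y Z) - d.connForm a Y (D X Z) ∈ d.quatSpan Z := by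
  have key : D X (d.connForm a Y Z) - d.connForm a Y (D X Z) =
      (d.Q a (a + 1) Y • d.connForm (a + 1) X Z +
        d.act X (d.Q a (a + 1) Y) • d.J (a + 1) Z) +
      (d.Q a (a + 2) Y • d.connForm (a + 2) X Z +
        d.act X (d.Q a (a + 2) Y) • d.J (a + 2) Z) := by
    simp only [connForm, hD.add_right, hD.smul_right, hD.J_eq, smul_add]
    abel
  rw [key]
  exact add_mem
    (add_mem (Submodule.smul_mem _ _ (d.connForm_mem_quatSpan _ X Z))
      (Submodule.smul_mem _ _ (d.J_mem_quatSpan _ Z)))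
    (add_mem (Submodule.smul_mem _ _ (d.connForm_mem_quatSpan _ X Z))
      (Submodule.smul_mem _ _ (d.J_mem_quatSpan _ Z)))

/-- The paper's `R^D̄(X,Y)J_aZ - J_aR^D̄(X,Y)Z = α(X,Y)J_bZ - β(X,Y)J_cZ`. -/
theorem connCurv_J_sub_mem_quatSpan (hD : d.IsHConnection D) (a : Fin 3) (X Y Z : V) :
    d.connCurv D X Y (d.J a Z) - d.J a (d.connCurv D X Y Z) ∈ d.quatSpan Z := by
  have key : d.connCurv D X Y (d.J a Z) - d.J a (d.connCurv D X Y Z) =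
      (D X (d.connForm a Y Z) - d.connForm a Y (D X Z)) -
      (D Y (d.connForm a X Z) - d.connForm a X (D Y Z)) - d.connForm a (d.bracket X Y) Z := by
    simp only [connCurv, hD.J_eq, hD.add_right, d.J_sub]
    abel
  rw [key]
  exact sub_mem (sub_mem (d.sub_connForm_mem_quatSpan hD a X Y Z)
    (d.sub_connForm_mem_quatSpan hD a Y X Z)) (d.connForm_mem_quatSpan a _ Z)

theorem g_connCurv_J_J (hD : d.IsHConnection D) (a : Fin 3) (X Y Z W : V)
    (hW : ∀ e, d.g (d.J e Z) (d.J a W) = 0) :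
    d.g (d.connCurv D X Y (d.J a Z)) (d.J a W) = d.g (d.connCurv D X Y Z) W := by
  have hcomm :=
    d.g_eq_zero_of_mem_quatSpan hW (d.connCurv_J_sub_mem_quatSpan hD a X Y Z)
  rwa [d.g_sub_left, d.g_J, sub_eq_zero] at hcomm

end IsHConnection

def weylTensor (X Y : V) : V := d.lee X • Y + d.lee Y • X - d.g X Y • d.B

def weyl (X Y : V) : V := d.nabla X Y - d.half • d.weylTensor X Y

theorem weylTensor_comm (X Y : V) : d.weylTensor X Y = d.weylTensor Y X := by
  rw [weylTensor, weylTensor, d.g_symm]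
  abel

theorem weylTensor_add_right (X Y Z : V) :
    d.weylTensor X (Y + Z) = d.weylTensor X Y + d.weylTensor X Z := by
  simp only [weylTensor, lee, d.g_add_left, d.g_add_right]
  module

theorem weylTensor_smul_right (X : V) (f : R) (Y : V) :
    d.weylTensor X (f • Y) = f • d.weylTensor X Y := by
  simp only [weylTensor, lee, d.g_smul_left, d.g_smul_right]
  module

theorem weylTensor_sub_right (X Y Z : V) :
    d.weylTensor X (Y - Z) = d.weylTensor X Y - d.weylTensor X Z :=
  (AddMonoidHom.mk' (d.weylTensor X) (d.weylTensor_add_right X)).map_sub Y Z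

theorem weylTensor_sub_left (X Y Z : V) :
    d.weylTensor (X - Y) Z = d.weylTensor X Z - d.weylTensor Y Z := by
  rw [d.weylTensor_comm, d.weylTensor_sub_right, d.weylTensor_comm Z, d.weylTensor_comm Z]

theorem weyl_add_right (X Y Z : V) : d.weyl X (Y + Z) = d.weyl X Y + d.weyl X Z := by
  rw [weyl, weyl, weyl, d.nabla_add_right, d.weylTensor_add_right]
  module

theorem weyl_smul_right (X : V) (f : R) (Y : V) :
    d.weyl X (f • Y) = f • d.weyl X Y + d.act X f • Y := by
  rw [weyl, weyl, d.nabla_smul_right, d.weylTensor_smul_right]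
  module

/-- The structure equation says exactly that the Weyl connection preserves `H`. -/
theorem weyl_J (a : Fin 3) (X Y : V) :
    d.weyl X (d.J a Y) = d.J a (d.weyl X Y) + d.connForm a X Y := by
  simp only [weyl, weylTensor, lee, connForm, d.struct_eq, d.J_sub, d.J_add, d.J_smul]
  module

theorem weyl_isHConnection : d.IsHConnection d.weyl :=
  ⟨d.weyl_add_right, d.weyl_smul_right, d.weyl_J⟩

theorem act_lee (hpar : ∀ X : V, d.nabla X d.B = 0) (X Y : V) :
    d.act X (d.lee Y) = d.lee (d.nabla X Y) := by
  rw [lee, lee, d.nabla_metric, hpar, d.g_zero_right, add_zero]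

theorem nabla_weylTensor (hpar : ∀ X : V, d.nabla X d.B = 0) (X Y Z : V) :
    d.nabla X (d.weylTensor Y Z) =
      d.weylTensor (d.nabla X Y) Z + d.weylTensor Y (d.nabla X Z) := by
  simp only [weylTensor, d.nabla_sub_right, d.nabla_add_right, d.nabla_smul_right, d.act_lee hpar,
    d.nabla_metric, hpar]
  module

def weylTensorComm (X Y Z : V) : V :=
  d.weylTensor X (d.weylTensor Y Z) - d.weylTensor Y (d.weylTensor X Z)

theorem connCurv_weyl (hpar : ∀ X : V, d.nabla X d.B = 0) (X Y Z : V) :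
    d.connCurv d.weyl X Y Z = d.curv X Y Z + (d.half * d.half) • d.weylTensorComm X Y Z := by
  simp only [connCurv, curv, weyl, weylTensorComm, d.nabla_sub_right, d.nabla_smul_right,
    d.act_half, d.nabla_weylTensor hpar, d.weylTensor_sub_right, d.weylTensor_smul_right,
    ← d.torsion_free, d.weylTensor_sub_left]
  module

theorem g_weylTensorComm (hunit : d.g d.B d.B = 1) (X Y Z W : V) :
    d.g (d.weylTensorComm X Y Z) W =
      d.lee Y * d.lee Z * d.g X W - d.lee X * d.lee Z * d.g Y W - d.g Y Z * d.g X W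
        + d.g X Z * d.g Y W + (d.lee X * d.g Y Z - d.lee Y * d.g X Z) * d.lee W := by
  simp only [weylTensorComm, weylTensor, lee, d.g_sub_left, d.g_add_left, d.g_smul_left,
    d.g_sub_right, d.g_add_right, d.g_smul_right, hunit, d.g_symm d.B W, d.g_symm Y X]
  ring

theorem R4_J_J_sub_R4 (hpar : ∀ X : V, d.nabla X d.B = 0) (a : Fin 3) (X Y Z W : V)
    (hW : ∀ e, d.g (d.J e Z) (d.J a W) = 0) :
    d.R4 X Y (d.J a Z) (d.J a W) - d.R4 X Y Z W = d.half * d.half *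
      (d.g (d.weylTensorComm X Y Z) W - d.g (d.weylTensorComm X Y (d.J a Z)) (d.J a W)) := by
  have hcurv : ∀ U, d.curv X Y U =
      d.connCurv d.weyl X Y U - (d.half * d.half) • d.weylTensorComm X Y U :=
    fun U => by rw [d.connCurv_weyl hpar]; abel
  have hweyl := d.g_connCurv_J_J d.weyl_isHConnection a X Y Z W hW
  simp only [R4, hcurv, d.g_sub_left, d.g_smul_left, hweyl]
  ring

end LCQK

/-- equation (4.5): Let `M̄` be a compact l.c.q.K. manifold with the
metric normalized so that the Lee form `ω` is parallel (`∇̄B = 0`) and `‖ω‖ = 1`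
(`g(B,B) = 1`), and `M` a quaternion CR-submanifold.  For any orthonormal `X ∈ Γ(D)`,
`Y ∈ Γ(D^⊥)` one has
`0 = −R̄(X,Y,X,Y) + R̄(X,Y,J_aX,J_aY) + ¼ω(X)² + ¼ω(Y)² − ¼`. -/
theorem curvature_identity {R V : Type} [CommRing R] [AddCommGroup V] [Module R V]
    (d : LCQK R V) (s : QCRSub R V d)
    (hpar : ∀ X : V, d.nabla X d.B = 0)
    (hunit : d.g d.B d.B = 1) :
    ∀ (a : Fin 3), ∀ X ∈ s.DD, ∀ Y ∈ s.Dp, d.g X X = 1 → d.g Y Y = 1 →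
      0 = -(d.R4 X Y X Y) + d.R4 X Y (d.J a X) (d.J a Y)
            + d.half * d.half * (d.lee X * d.lee X)
            + d.half * d.half * (d.lee Y * d.lee Y)
            - d.half * d.half := by
  intro a X hX Y hY hXX hYY
  have hXY : d.g X Y = 0 := s.orth X hX Y hY
  have hJY : ∀ U ∈ s.DD, d.g U (d.J a Y) = 0 := fun U hU => by
    rw [d.g_symm]
    exact s.J_anti a Y hY U (Submodule.mem_sup_left hU)
  have hdiff := d.R4_J_J_sub_R4 hpar a X Y X Y fun e => hJY _ (s.J_inv e X hX)
  have hYJX : d.g Y (d.J a X) = 0 := by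
    rw [d.g_symm]
    exact s.orth _ (s.J_inv a X hX) Y hY
  simp only [d.g_weylTensorComm hunit, d.g_symm Y X, hXY, hXX, hYY, hJY X hX, hYJX,
    d.g_J_self] at hdiff
  linear_combination -hdiff
end
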